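/- arXiv:2108.13001 — 3 statements merged into one kernel-verified Lean document; each statement's English description precedes it below -/
import Mathlib

section
/- Under the constraints τ = τ₁ - τ₂ + τ₃, k = k₁ - k₂ + k₃ with k₂ ≠ k₁ and k₂ ≠ k₃ (all kⱼ ∈ ℤ), writing ζ = τ + k² and ζⱼ = τⱼ + kⱼ², one has max{|ζ|, |ζ₁|, |ζ₂|, |ζ₃|} ≥ (1/2)|(k₁ - k₂)(k₂ - k₃)|, and hence max{|ζ|,|ζ₁|,|ζ₂|,|ζ₃|} ≥ c⟨k₁-k₂⟩⟨k₂-k₃⟩ for some absolute constant c > 0. -/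
/-! The quantity `ζ - ζ₁ + ζ₂ - ζ₃` does not depend on the `τ`'s: under the two constraints it is
`-2 (k₁ - k₂)(k₂ - k₃)`. An alternating sum of four terms is at most four times the largest of
them, and `k₂ ∉ {k₁, k₃}` makes both factors at least `1` in absolute value, so that
`⟨k₁ - k₂⟩⟨k₂ - k₃⟩ ≤ 2 |(k₁ - k₂)(k₂ - k₃)|`. -/

theorem resonance_identity {R : Type*} [CommRing R] {k k₁ k₂ k₃ τ τ₁ τ₂ τ₃ : R}
    (hk : k = k₁ - k₂ + k₃) (hτ : τ = τ₁ - τ₂ + τ₃) :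
    (τ + k ^ 2) - (τ₁ + k₁ ^ 2) + (τ₂ + k₂ ^ 2) - (τ₃ + k₃ ^ 2) =
      -(2 * ((k₁ - k₂) * (k₂ - k₃))) := by
  subst hk hτ
  ring

theorem abs_sub_add_sub_le_four_mul_max {α : Type*} [AddCommGroup α] [LinearOrder α]
    [IsOrderedAddMonoid α] (a b c d : α) :
    |a - b + c - d| ≤ 4 • max (max |a| |b|) (max |c| |d|) := by
  set M := max (max |a| |b|) (max |c| |d|)
  calc |a - b + c - d| ≤ |a| + |b| + |c| + |d| := by
        grw [abs_sub, abs_add_le, abs_sub]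
    _ ≤ M + M + M + M := by gcongr <;> simp [M]
    _ = 4 • M := by abel

theorem one_le_abs_intCast_sub {m n : ℤ} (h : m ≠ n) : 1 ≤ |(m : ℝ) - n| := by
  exact_mod_cast Int.one_le_abs (sub_ne_zero.2 h)

theorem sqrt_one_add_sq_mul_le {a b : ℝ} (ha : 1 ≤ |a|) (hb : 1 ≤ |b|) :
    √(1 + a ^ 2) * √(1 + b ^ 2) ≤ 2 * |a * b| := by
  have ha2 : 1 ≤ a ^ 2 := one_le_sq_iff_one_le_abs a |>.2 ha
  have hb2 : 1 ≤ b ^ 2 := one_le_sq_iff_one_le_abs b |>.2 hb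
  rw [← Real.sqrt_mul (by positivity), Real.sqrt_le_iff]
  refine ⟨by positivity, ?_⟩
  rw [mul_pow, sq_abs, mul_pow]
  nlinarith [mul_le_mul ha2 hb2 zero_le_one (by positivity)]

/-- Modulation bound: under `τ = τ₁ - τ₂ + τ₃`, `k = k₁ - k₂ + k₃`, `k₂ ∉ {k₁, k₃}`,
with `ζ = τ + k²`, `ζⱼ = τⱼ + kⱼ²`, one has
`max{|ζ|,|ζ₁|,|ζ₂|,|ζ₃|} ≥ (1/2)|(k₁-k₂)(k₂-k₃)|`, and hence
`max{|ζ|,|ζ₁|,|ζ₂|,|ζ₃|} ≥ c⟨k₁-k₂⟩⟨k₂-k₃⟩` for an absolute constant `c > 0`. -/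
theorem modulation_max_lower_bound :
    ∃ c : ℝ, 0 < c ∧
      ∀ (k k₁ k₂ k₃ : ℤ) (τ τ₁ τ₂ τ₃ : ℝ),
        k = k₁ - k₂ + k₃ → τ = τ₁ - τ₂ + τ₃ → k₂ ≠ k₁ → k₂ ≠ k₃ →
        ((1/2 : ℝ) * |((k₁ : ℝ) - (k₂ : ℝ)) * ((k₂ : ℝ) - (k₃ : ℝ))| ≤
            max (max |τ + (k : ℝ) ^ 2| |τ₁ + (k₁ : ℝ) ^ 2|)
              (max |τ₂ + (k₂ : ℝ) ^ 2| |τ₃ + (k₃ : ℝ) ^ 2|)) ∧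
        (c * (Real.sqrt (1 + ((k₁ : ℝ) - (k₂ : ℝ)) ^ 2) *
              Real.sqrt (1 + ((k₂ : ℝ) - (k₃ : ℝ)) ^ 2)) ≤
            max (max |τ + (k : ℝ) ^ 2| |τ₁ + (k₁ : ℝ) ^ 2|)
              (max |τ₂ + (k₂ : ℝ) ^ 2| |τ₃ + (k₃ : ℝ) ^ 2|)) := by
  refine ⟨1 / 4, by norm_num, fun k k₁ k₂ k₃ τ τ₁ τ₂ τ₃ hk hτ h₁ h₃ => ?_⟩
  have hk' : (k : ℝ) = k₁ - k₂ + k₃ := by exact_mod_cast hk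
  have hmax := abs_sub_add_sub_le_four_mul_max (τ + (k : ℝ) ^ 2) (τ₁ + (k₁ : ℝ) ^ 2)
    (τ₂ + (k₂ : ℝ) ^ 2) (τ₃ + (k₃ : ℝ) ^ 2)
  rw [resonance_identity hk' hτ, abs_neg, abs_mul, abs_two, nsmul_eq_mul] at hmax
  have hsqrt := sqrt_one_add_sq_mul_le (one_le_abs_intCast_sub h₁.symm)
    (one_le_abs_intCast_sub h₃)
  constructor <;> push_cast at hmax ⊢ <;> linarith
end

section
/- Let μ ≥ 0, T ∈ (0,1], s ∈ ℝ, α ∈ [0,1], and u₀ ∈ H^{s+α/2}(𝕋) with Fourier coefficients û₀(k). Define U_μ(t)u₀ by its Fourier coefficients e^{-ik²t - μ|k|t}û₀(k). Then sup_{t∈[0,T]} | ‖U_μ(t)u₀‖²_{H^s} - ‖u₀‖²_{H^s} | ≤ (2Tμ)^α ‖u₀‖²_{H^{s+α/2}}. -/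
/-! The phase `e^{-ik²t}` is unimodular, so `U_μ(t)` only damps the mode `k` by `e^{-μ|k|t}`,
and the mode's energy changes by
`(1 - e^{-2μ|k|t})|û₀(k)|² ≤ min(2Tμ|k|, 1)|û₀(k)|² ≤ (2Tμ|k|)^α|û₀(k)|²`. As `|k|^α ≤ ⟨k⟩^α`, summing against `⟨k⟩^{2s}` gives the bound. -/

open Real

lemma one_sub_exp_neg_le_rpow {x α : ℝ} (hx : 0 ≤ x) (hα0 : 0 ≤ α) (hα1 : α ≤ 1) :
    1 - exp (-x) ≤ x ^ α := by
  rcases le_total x 1 with hx1 | hx1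
  · calc 1 - exp (-x) ≤ x := by linarith [one_sub_le_exp_neg x]
      _ ≤ x ^ α := self_le_rpow_of_le_one hx hx1 hα1
  · calc 1 - exp (-x) ≤ 1 := by linarith [exp_pos (-x)]
      _ ≤ x ^ α := one_le_rpow hx1 hα0

lemma abs_rpow_le_one_add_sq_rpow_half (x : ℝ) {α : ℝ} (hα : 0 ≤ α) :
    |x| ^ α ≤ (1 + x ^ 2) ^ (α / 2) := by
  calc |x| ^ α ≤ √(1 + x ^ 2) ^ α :=
        rpow_le_rpow (abs_nonneg x) (abs_le_sqrt (by linarith)) hα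
    _ = (1 + x ^ 2) ^ (α / 2) := by
        rw [sqrt_eq_rpow, ← rpow_mul (by positivity)]
        ring_nf

lemma abs_tsum_sub_tsum_le {ι : Type*} {f g h : ι → ℝ} (hf : Summable f) (hg : Summable g)
    (hh : Summable h) (hfg : ∀ i, |f i - g i| ≤ h i) :
    |∑' i, f i - ∑' i, g i| ≤ ∑' i, h i := by
  rw [← hf.tsum_sub hg, abs_le, ← tsum_neg]
  exact ⟨hh.neg.tsum_le_tsum (fun i => neg_le_of_abs_le (hfg i)) (hf.sub hg),
    (hf.sub hg).tsum_le_tsum (fun i => le_of_abs_le (hfg i)) hh⟩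

/-- The Fourier multiplier of `U_μ(t)` at frequency `k`. -/
noncomputable def dampedSchrodingerSymbol (μ t : ℝ) (k : ℤ) : ℂ :=
  Complex.exp ((-Complex.I * (k : ℂ) ^ 2 - ((μ * |(k : ℝ)| : ℝ) : ℂ)) * (t : ℂ))

lemma norm_dampedSchrodingerSymbol (μ t : ℝ) (k : ℤ) :
    ‖dampedSchrodingerSymbol μ t k‖ = exp (-(μ * |(k : ℝ)| * t)) := by
  rw [dampedSchrodingerSymbol, Complex.norm_exp]
  congr 1
  simp [pow_two, Complex.mul_re, Complex.mul_im]

lemma norm_dampedSchrodingerSymbol_le_one {μ t : ℝ} (hμ : 0 ≤ μ) (ht : 0 ≤ t) (k : ℤ) :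
    ‖dampedSchrodingerSymbol μ t k‖ ≤ 1 := by
  rw [norm_dampedSchrodingerSymbol, exp_le_one_iff, neg_nonpos]
  positivity

lemma abs_norm_dampedSchrodingerSymbol_mul_sq_sub_le {μ t T α : ℝ} (hμ : 0 ≤ μ)
    (ht0 : 0 ≤ t) (htT : t ≤ T) (hα0 : 0 ≤ α) (hα1 : α ≤ 1) (k : ℤ) (c : ℂ) :
    |‖dampedSchrodingerSymbol μ t k * c‖ ^ 2 - ‖c‖ ^ 2|
      ≤ (2 * T * μ) ^ α * |(k : ℝ)| ^ α * ‖c‖ ^ 2 := by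
  have hx : 0 ≤ 2 * μ * |(k : ℝ)| * t := by positivity
  have hxT : 2 * μ * |(k : ℝ)| * t ≤ 2 * T * μ * |(k : ℝ)| := by
    have : 0 ≤ 2 * μ * |(k : ℝ)| := by positivity
    nlinarith
  have hdiff : ‖dampedSchrodingerSymbol μ t k * c‖ ^ 2 - ‖c‖ ^ 2
      = -((1 - exp (-(2 * μ * |(k : ℝ)| * t))) * ‖c‖ ^ 2) := by
    rw [norm_mul, mul_pow, norm_dampedSchrodingerSymbol, ← exp_nat_mul]
    ring_nf
  have hdecay : 0 ≤ 1 - exp (-(2 * μ * |(k : ℝ)| * t)) := by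
    linarith [exp_le_one_iff.2 (neg_nonpos.2 hx)]
  rw [hdiff, abs_neg, abs_of_nonneg (by positivity),
    ← mul_rpow (by nlinarith) (abs_nonneg _)]
  gcongr
  exact (one_sub_exp_neg_le_rpow hx hα0 hα1).trans (rpow_le_rpow hx hxT hα0)

lemma abs_weighted_norm_dampedSchrodingerSymbol_mul_sq_sub_le {μ t T s α : ℝ} (hμ : 0 ≤ μ)
    (ht0 : 0 ≤ t) (htT : t ≤ T) (hα0 : 0 ≤ α) (hα1 : α ≤ 1) (k : ℤ) (c : ℂ) :
    |(1 + (k : ℝ) ^ 2) ^ s * ‖dampedSchrodingerSymbol μ t k * c‖ ^ 2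
        - (1 + (k : ℝ) ^ 2) ^ s * ‖c‖ ^ 2|
      ≤ (2 * T * μ) ^ α * ((1 + (k : ℝ) ^ 2) ^ (s + α / 2) * ‖c‖ ^ 2) := by
  have hw : 0 < 1 + (k : ℝ) ^ 2 := by positivity
  have hTμ : 0 ≤ 2 * T * μ := by nlinarith
  rw [← mul_sub, abs_mul, abs_of_pos (rpow_pos_of_pos hw s), rpow_add hw]
  calc (1 + (k : ℝ) ^ 2) ^ s * |‖dampedSchrodingerSymbol μ t k * c‖ ^ 2 - ‖c‖ ^ 2|
      ≤ (1 + (k : ℝ) ^ 2) ^ s * ((2 * T * μ) ^ α * |(k : ℝ)| ^ α * ‖c‖ ^ 2) := by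
        gcongr
        exact abs_norm_dampedSchrodingerSymbol_mul_sq_sub_le hμ ht0 htT hα0 hα1 k c
    _ ≤ (1 + (k : ℝ) ^ 2) ^ s *
          ((2 * T * μ) ^ α * (1 + (k : ℝ) ^ 2) ^ (α / 2) * ‖c‖ ^ 2) := by
        gcongr
        exact abs_rpow_le_one_add_sq_rpow_half _ hα0
    _ = _ := by ring

theorem semigroup_Hs_norm_difference_general (μ T s α : ℝ) (hμ : 0 ≤ μ)
    (hα0 : 0 ≤ α) (hα1 : α ≤ 1) (u₀ : ℤ → ℂ)
    (hsum : Summable (fun k : ℤ => (1 + (k : ℝ) ^ 2) ^ (s + α / 2) * ‖u₀ k‖ ^ 2)) :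
    ∀ t ∈ Set.Icc (0 : ℝ) T,
      |(∑' k : ℤ, (1 + (k : ℝ) ^ 2) ^ s *
            ‖Complex.exp ((-Complex.I * (k : ℂ) ^ 2 - ((μ * |(k : ℝ)| : ℝ) : ℂ)) * (t : ℂ)) *
              u₀ k‖ ^ 2) -
          ∑' k : ℤ, (1 + (k : ℝ) ^ 2) ^ s * ‖u₀ k‖ ^ 2|
        ≤ (2 * T * μ) ^ α * ∑' k : ℤ, (1 + (k : ℝ) ^ 2) ^ (s + α / 2) * ‖u₀ k‖ ^ 2 := by
  rintro t ⟨ht0, htT⟩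
  have hsum_s : Summable (fun k : ℤ => (1 + (k : ℝ) ^ 2) ^ s * ‖u₀ k‖ ^ 2) :=
    hsum.of_nonneg_of_le (fun k => by positivity) fun k => by
      gcongr
      · exact le_add_of_nonneg_right (sq_nonneg _)
      · linarith
  have hsum_evolved : Summable (fun k : ℤ =>
      (1 + (k : ℝ) ^ 2) ^ s * ‖dampedSchrodingerSymbol μ t k * u₀ k‖ ^ 2) :=
    hsum_s.of_nonneg_of_le (fun k => by positivity) fun k => by
      rw [norm_mul]
      gcongr
      exact mul_le_of_le_one_left (norm_nonneg _) (norm_dampedSchrodingerSymbol_le_one hμ ht0 k)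
  rw [← tsum_mul_left]
  exact abs_tsum_sub_tsum_le hsum_evolved hsum_s (hsum.mul_left _) fun k =>
    abs_weighted_norm_dampedSchrodingerSymbol_mul_sq_sub_le hμ ht0 htT hα0 hα1 k (u₀ k)

/-- For `μ ≥ 0`, `T ∈ (0,1]`, `s ∈ ℝ`, `α ∈ [0,1]`, and `u₀ ∈ H^{s+α/2}(𝕋)`
(given by its Fourier coefficients, with `‖f‖²_{H^σ} = ∑ₖ ⟨k⟩^{2σ}|f̂(k)|²`),
`sup_{t∈[0,T]} |‖U_μ(t)u₀‖²_{H^s} - ‖u₀‖²_{H^s}| ≤ (2Tμ)^α ‖u₀‖²_{H^{s+α/2}}`,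
where `U_μ(t)` has symbol `e^{-ik²t - μ|k|t}`. -/
theorem semigroup_Hs_norm_difference (μ T s α : ℝ) (hμ : 0 ≤ μ) (hT0 : 0 < T) (hT1 : T ≤ 1)
    (hα0 : 0 ≤ α) (hα1 : α ≤ 1) (u₀ : ℤ → ℂ)
    (hsum : Summable (fun k : ℤ => (1 + (k : ℝ) ^ 2) ^ (s + α / 2) * ‖u₀ k‖ ^ 2)) :
    ∀ t ∈ Set.Icc (0 : ℝ) T,
      |(∑' k : ℤ, (1 + (k : ℝ) ^ 2) ^ s *
            ‖Complex.exp ((-Complex.I * (k : ℂ) ^ 2 - ((μ * |(k : ℝ)| : ℝ) : ℂ)) * (t : ℂ)) *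
              u₀ k‖ ^ 2) -
          ∑' k : ℤ, (1 + (k : ℝ) ^ 2) ^ s * ‖u₀ k‖ ^ 2|
        ≤ (2 * T * μ) ^ α * ∑' k : ℤ, (1 + (k : ℝ) ^ 2) ^ (s + α / 2) * ‖u₀ k‖ ^ 2 :=
  semigroup_Hs_norm_difference_general μ T s α hμ hα0 hα1 u₀ hsum
end

section
/- The solution map for the reduced KDNLS equation u₀ ↦ u, where û(t,k) = e^{-ik²t + ω(k)‖u₀‖²_{L²}t}û₀(k) with ω(k) = i(α/π)k + (β/(2π))|k| and β < 0, is Lipschitz continuous from L²(𝕋) to C([0,∞); L²(𝕋)): there exists C = C(α,β) such that sup_{t≥0} ‖u(t) - v(t)‖_{L²} ≤ C‖u₀ - v₀‖_{L²} for all u₀, v₀ ∈ L²(𝕋) \ {0}. -/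
/-!
Write `M = ‖u₀‖²`, `N = ‖v₀‖²` with `N ≤ M` (the other case is symmetric) and
`E_R(k) = e^{(-ik² + ω(k)R)t}`, so that `E_M u₀ - E_N v₀ = E_M (u₀ - v₀) + (E_M - E_N) v₀`.
As `Re ω ≤ 0`, `|E_R| ≤ 1`, and the mean value theorem in `R` gives
`|E_M(k) - E_N(k)| ≤ |ω(k)| t e^{N t Re ω(k)} (M - N) ≤ K (M - N) / N`, because
`|ω(k)| ≤ K |Re ω(k)|` with `K = (2|α| + |β|)/|β|` and `s e^{-s} ≤ 1`.
Together with the trivial bound `|E_M - E_N| ≤ 2` this is at most `(6K + 4)(√M - √N)/√M`,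
and `√M - √N ≤ ‖u₀ - v₀‖` by the triangle inequality in `ℓ²`.
-/

/-- `ω(k) = i(α/π)k + (β/(2π))|k|`. -/
noncomputable def reducedSymbol (α β : ℝ) (k : ℤ) : ℂ :=
  Complex.I * ((α / Real.pi : ℝ) : ℂ) * (k : ℂ) + ((β / (2 * Real.pi) * |(k : ℝ)| : ℝ) : ℂ)

open Complex

section SquareSummable

variable {ι E F G : Type*} [SeminormedAddCommGroup E] [SeminormedAddCommGroup F]
  [SeminormedAddCommGroup G] {f : ι → E} {x : ι → F} {y : ι → G} {A B : ℝ}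

lemma summable_norm_sq_of_norm_le_add (hx : Summable fun i => ‖x i‖ ^ 2)
    (hy : Summable fun i => ‖y i‖ ^ 2) (h : ∀ i, ‖f i‖ ≤ A * ‖x i‖ + B * ‖y i‖) :
    Summable fun i => ‖f i‖ ^ 2 := by
  refine .of_nonneg_of_le (fun i => by positivity) (fun i => ?_)
    ((hx.mul_left (2 * A ^ 2)).add (hy.mul_left (2 * B ^ 2)))
  have := h i
  nlinarith [norm_nonneg (f i), sq_nonneg (A * ‖x i‖ - B * ‖y i‖)]

lemma sqrt_tsum_norm_sq_le_of_norm_le_add (hA : 0 ≤ A) (hB : 0 ≤ B)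
    (hx : Summable fun i => ‖x i‖ ^ 2) (hy : Summable fun i => ‖y i‖ ^ 2)
    (h : ∀ i, ‖f i‖ ≤ A * ‖x i‖ + B * ‖y i‖) :
    √(∑' i, ‖f i‖ ^ 2) ≤ A * √(∑' i, ‖x i‖ ^ 2) + B * √(∑' i, ‖y i‖ ^ 2) := by
  have hAx : Summable fun i => (A * ‖x i‖) ^ (2 : ℝ) := by
    simpa only [Real.rpow_two, mul_pow] using hx.mul_left (A ^ 2)
  have hBy : Summable fun i => (B * ‖y i‖) ^ (2 : ℝ) := by
    simpa only [Real.rpow_two, mul_pow] using hy.mul_left (B ^ 2)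
  obtain ⟨hsum, hminkowski⟩ := Real.Lp_add_le_tsum_of_nonneg one_le_two
    (fun i => by positivity) (fun i => by positivity) hAx hBy
  simp only [Real.rpow_two, ← Real.sqrt_eq_rpow, mul_pow, tsum_mul_left,
    Real.sqrt_mul (sq_nonneg _), Real.sqrt_sq hA, Real.sqrt_sq hB] at hsum hminkowski
  refine le_trans (Real.sqrt_le_sqrt ?_) hminkowski
  exact (summable_norm_sq_of_norm_le_add hx hy h).tsum_le_tsum
    (fun i => pow_le_pow_left₀ (norm_nonneg _) (h i) 2) hsum

end SquareSummable

lemma Complex.norm_exp_mul_ofReal_le_one {z : ℂ} (hz : z.re ≤ 0) {R : ℝ} (hR : 0 ≤ R) :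
    ‖exp (z * R)‖ ≤ 1 := by
  rw [norm_exp, re_mul_ofReal, Real.exp_le_one_iff]
  exact mul_nonpos_of_nonpos_of_nonneg hz hR

lemma Complex.norm_exp_mul_ofReal_sub_le {z : ℂ} (hz : z.re ≤ 0) {N M : ℝ} (hNM : N ≤ M) :
    ‖exp (z * M) - exp (z * N)‖ ≤ ‖z‖ * Real.exp (z.re * N) * (M - N) := by
  have hderiv : ∀ R ∈ Set.Icc N M, HasDerivWithinAt (fun R : ℝ => exp (z * R))
      (exp (z * R) * (z * 1)) (Set.Icc N M) R :=
    fun R _ => ((hasDerivAt_id R).ofReal_comp.const_mul z).cexp.hasDerivWithinAt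
  have hbound : ∀ R ∈ Set.Ico N M, ‖exp (z * R) * (z * 1)‖ ≤ ‖z‖ * Real.exp (z.re * N) := by
    intro R hR
    rw [mul_one, norm_mul, norm_exp, re_mul_ofReal, mul_comm]
    exact mul_le_mul_of_nonneg_left (Real.exp_le_exp.2 (mul_le_mul_of_nonpos_left hR.1 hz))
      (norm_nonneg z)
  exact norm_image_sub_le_of_norm_deriv_le_segment' hderiv hbound M (Set.right_mem_Icc.2 hNM)

lemma Complex.norm_exp_mul_ofReal_sub_le_div {z : ℂ} {L N M : ℝ} (hz : z.re ≤ 0) (hL : 0 ≤ L)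
    (hzL : ‖z‖ ≤ L * -z.re) (hN : 0 < N) (hNM : N ≤ M) :
    ‖exp (z * M) - exp (z * N)‖ ≤ L * ((M - N) / N) := by
  have hMN : 0 ≤ M - N := sub_nonneg.2 hNM
  have hdecay : -z.re * N * Real.exp (-(-z.re * N)) ≤ 1 :=
    (Real.mul_exp_neg_le_exp_neg_one _).trans (Real.exp_le_one_iff.2 (by norm_num))
  calc ‖exp (z * M) - exp (z * N)‖ ≤ ‖z‖ * Real.exp (z.re * N) * (M - N) :=
        norm_exp_mul_ofReal_sub_le hz hNM
    _ ≤ L * -z.re * Real.exp (z.re * N) * (M - N) := by gcongr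
    _ = L * (-z.re * N * Real.exp (-(-z.re * N))) * ((M - N) / N) := by
        rw [neg_mul, neg_neg]; field_simp
    _ ≤ L * 1 * ((M - N) / N) := by gcongr
    _ = L * ((M - N) / N) := by rw [mul_one]

lemma le_mul_sub_div_of_le_two_of_le {x L a b : ℝ} (hL : 0 ≤ L) (hb : 0 < b) (hba : b ≤ a)
    (hx₂ : x ≤ 2) (hx : x ≤ L * ((a ^ 2 - b ^ 2) / b ^ 2)) :
    x ≤ (6 * L + 4) * ((a - b) / a) := by
  have ha : 0 < a := hb.trans_le hba
  have hab : 0 ≤ (a - b) / a := div_nonneg (sub_nonneg.2 hba) ha.le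
  rcases le_or_gt a (2 * b) with h | h
  · have : (a ^ 2 - b ^ 2) / b ^ 2 ≤ 6 * ((a - b) / a) := by
      rw [div_le_iff₀ (by positivity), mul_div_assoc', div_mul_eq_mul_div, le_div_iff₀ ha]
      nlinarith [mul_le_mul_of_nonneg_left (by linarith : a + b ≤ 3 * b) (sub_nonneg.2 hba)]
    nlinarith [mul_le_mul_of_nonneg_left this hL]
  · have : 2 ≤ 4 * ((a - b) / a) := by
      rw [mul_div_assoc', le_div_iff₀ ha]; linarith
    nlinarith

lemma Complex.norm_exp_mul_ofReal_sub_le_sqrt {z : ℂ} {L N M : ℝ} (hz : z.re ≤ 0) (hL : 0 ≤ L)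
    (hzL : ‖z‖ ≤ L * -z.re) (hN : 0 < N) (hNM : N ≤ M) :
    ‖exp (z * M) - exp (z * N)‖ ≤ (6 * L + 4) * ((√M - √N) / √M) := by
  have hM : 0 ≤ M := hN.le.trans hNM
  refine le_mul_sub_div_of_le_two_of_le hL (Real.sqrt_pos.2 hN) (Real.sqrt_le_sqrt hNM) ?_ ?_
  · refine (norm_sub_le _ _).trans ?_
    linarith [norm_exp_mul_ofReal_le_one hz hM, norm_exp_mul_ofReal_le_one hz hN.le]
  · rw [Real.sq_sqrt hM, Real.sq_sqrt hN.le]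
    exact norm_exp_mul_ofReal_sub_le_div hz hL hzL hN hNM

lemma reducedSymbol_re (α β : ℝ) (k : ℤ) :
    (reducedSymbol α β k).re = β / (2 * Real.pi) * |(k : ℝ)| := by
  rw [reducedSymbol, add_re, ofReal_re, mul_re, mul_re]
  simp

lemma norm_reducedSymbol_le (α : ℝ) {β : ℝ} (hβ : β < 0) (k : ℤ) :
    ‖reducedSymbol α β k‖ ≤ (2 * |α| + |β|) / |β| * -(reducedSymbol α β k).re := by
  calc ‖reducedSymbol α β k‖
      ≤ |α / Real.pi| * |(k : ℝ)| + |β / (2 * Real.pi)| * |(k : ℝ)| := by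
        refine (norm_add_le _ _).trans_eq ?_
        simp only [norm_mul, norm_I, one_mul, norm_real, Real.norm_eq_abs, norm_intCast, abs_abs]
    _ = (2 * |α| + |β|) / |β| * -(reducedSymbol α β k).re := by
        simp only [reducedSymbol_re, abs_div, abs_mul, abs_of_neg hβ, abs_of_pos Real.pi_pos,
          abs_two]
        field_simp [hβ.ne]

noncomputable def reducedPropagator (α β t R : ℝ) (k : ℤ) : ℂ :=
  exp ((-I * (k : ℂ) ^ 2 + reducedSymbol α β k * R) * t)

section ReducedPropagator

variable (α : ℝ) {β t : ℝ}

lemma reducedPropagator_eq (R : ℝ) (k : ℤ) :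
    reducedPropagator α β t R k
      = exp (((-(k ^ 2 * t) : ℝ) : ℂ) * I) * exp (reducedSymbol α β k * t * R) := by
  rw [reducedPropagator, ← exp_add]
  push_cast
  ring_nf

lemma reducedSymbol_mul_ofReal_re_nonpos (hβ : β ≤ 0) (ht : 0 ≤ t) (k : ℤ) :
    (reducedSymbol α β k * t).re ≤ 0 := by
  rw [re_mul_ofReal, reducedSymbol_re]
  exact mul_nonpos_of_nonpos_of_nonneg
    (mul_nonpos_of_nonpos_of_nonneg (div_nonpos_of_nonpos_of_nonneg hβ (by positivity))
      (abs_nonneg _)) ht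

lemma norm_reducedPropagator_le_one (hβ : β ≤ 0) (ht : 0 ≤ t) {R : ℝ} (hR : 0 ≤ R)
    (k : ℤ) : ‖reducedPropagator α β t R k‖ ≤ 1 := by
  rw [reducedPropagator_eq, norm_mul, norm_exp_ofReal_mul_I, one_mul]
  exact norm_exp_mul_ofReal_le_one (reducedSymbol_mul_ofReal_re_nonpos α hβ ht k) hR

lemma norm_reducedPropagator_sub_le (hβ : β < 0) (ht : 0 ≤ t) {N M : ℝ} (hN : 0 < N)
    (hNM : N ≤ M) (k : ℤ) :
    ‖reducedPropagator α β t M k - reducedPropagator α β t N k‖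
      ≤ (6 * ((2 * |α| + |β|) / |β|) + 4) * ((√M - √N) / √M) := by
  rw [reducedPropagator_eq, reducedPropagator_eq, ← mul_sub, norm_mul, norm_exp_ofReal_mul_I,
    one_mul]
  refine norm_exp_mul_ofReal_sub_le_sqrt (reducedSymbol_mul_ofReal_re_nonpos α hβ.le ht k)
    (by positivity) ?_ hN hNM
  rw [norm_mul, norm_real, Real.norm_of_nonneg ht, re_mul_ofReal, ← neg_mul, ← mul_assoc]
  exact mul_le_mul_of_nonneg_right (norm_reducedSymbol_le α hβ k) ht

lemma sqrt_tsum_norm_reducedPropagator_mul_sub_le (hβ : β < 0) (ht : 0 ≤ t)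
    {u v : ℤ → ℂ} (hu : Summable fun k => ‖u k‖ ^ 2) (hv : Summable fun k => ‖v k‖ ^ 2)
    (hv0 : v ≠ 0) (hvu : ∑' k, ‖v k‖ ^ 2 ≤ ∑' k, ‖u k‖ ^ 2) :
    √(∑' k, ‖reducedPropagator α β t (∑' j, ‖u j‖ ^ 2) k * u k
        - reducedPropagator α β t (∑' j, ‖v j‖ ^ 2) k * v k‖ ^ 2)
      ≤ (6 * ((2 * |α| + |β|) / |β|) + 5) * √(∑' k, ‖u k - v k‖ ^ 2) := by
  set M := ∑' j, ‖u j‖ ^ 2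
  set N := ∑' j, ‖v j‖ ^ 2
  set c := 6 * ((2 * |α| + |β|) / |β|) + 4
  set D := √(∑' k, ‖u k - v k‖ ^ 2)
  obtain ⟨k₀, hk₀⟩ := Function.ne_iff.1 hv0
  have hN : 0 < N := hv.tsum_pos (fun k => by positivity) k₀ (by positivity)
  have hNM : √N ≤ √M := Real.sqrt_le_sqrt hvu
  have hM : 0 < √M := (Real.sqrt_pos.2 hN).trans_le hNM
  have hc : 0 ≤ c * ((√M - √N) / √M) := by
    have : 0 ≤ (√M - √N) / √M := div_nonneg (sub_nonneg.2 hNM) hM.le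
    positivity
  have huv : Summable fun k => ‖u k - v k‖ ^ 2 :=
    summable_norm_sq_of_norm_le_add (A := 1) (B := 1) hu hv fun k => by
      simpa only [one_mul] using norm_sub_le _ _
  have hmass : √M - √N ≤ D := by
    have := sqrt_tsum_norm_sq_le_of_norm_le_add (f := u) zero_le_one zero_le_one huv hv fun k => by
      simpa only [one_mul, sub_add_cancel] using norm_add_le (u k - v k) (v k)
    linarith
  have hpoint : ∀ k, ‖reducedPropagator α β t M k * u k - reducedPropagator α β t N k * v k‖
      ≤ 1 * ‖u k - v k‖ + c * ((√M - √N) / √M) * ‖v k‖ := by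
    intro k
    rw [show ∀ a b x y : ℂ, a * x - b * y = a * (x - y) + (a - b) * y by intros; ring]
    refine (norm_add_le _ _).trans ?_
    rw [norm_mul, norm_mul]
    gcongr
    · exact norm_reducedPropagator_le_one α hβ.le ht (hN.le.trans hvu) k
    · exact norm_reducedPropagator_sub_le α hβ ht hN hvu k
  calc _ ≤ 1 * D + c * ((√M - √N) / √M) * √N :=
        sqrt_tsum_norm_sq_le_of_norm_le_add zero_le_one hc huv hv hpoint
    _ ≤ D + c * D := by
        have : (√M - √N) / √M * √N ≤ D := by
          rw [div_mul_eq_mul_div, div_le_iff₀ hM]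
          nlinarith
        rw [one_mul, mul_assoc]
        gcongr
    _ = _ := by ring

end ReducedPropagator

/-- The solution map of the reduced KDNLS equation, `u₀ ↦ u` with
`û(t,k) = e^{-ik²t + ω(k)‖u₀‖²_{L²}t}û₀(k)`, `β < 0`, is Lipschitz from `L²(𝕋)`
to `C([0,∞);L²(𝕋))`: there is `C = C(α,β)` with
`sup_{t≥0}‖u(t) - v(t)‖_{L²} ≤ C‖u₀ - v₀‖_{L²}` for all nonzero `u₀, v₀ ∈ L²(𝕋)`
(everything described by Fourier coefficients). -/
theorem reduced_solution_map_lipschitz (α β : ℝ) (hβ : β < 0) :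
    ∃ C : ℝ, 0 < C ∧
      ∀ (u₀ v₀ : ℤ → ℂ),
        Summable (fun k : ℤ => ‖u₀ k‖ ^ 2) → Summable (fun k : ℤ => ‖v₀ k‖ ^ 2) →
        u₀ ≠ 0 → v₀ ≠ 0 →
        ∀ t : ℝ, 0 ≤ t →
          Real.sqrt (∑' k : ℤ,
              ‖Complex.exp ((-Complex.I * (k : ℂ) ^ 2 +
                    reducedSymbol α β k * ((∑' j : ℤ, ‖u₀ j‖ ^ 2 : ℝ) : ℂ)) * (t : ℂ)) * u₀ k -
                Complex.exp ((-Complex.I * (k : ℂ) ^ 2 +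
                    reducedSymbol α β k * ((∑' j : ℤ, ‖v₀ j‖ ^ 2 : ℝ) : ℂ)) * (t : ℂ)) * v₀ k‖ ^ 2)
            ≤ C * Real.sqrt (∑' k : ℤ, ‖u₀ k - v₀ k‖ ^ 2) := by
  refine ⟨6 * ((2 * |α| + |β|) / |β|) + 5, by positivity, fun u₀ v₀ hu hv hu0 hv0 t ht => ?_⟩
  rcases le_total (∑' j, ‖v₀ j‖ ^ 2) (∑' j, ‖u₀ j‖ ^ 2) with h | h
  · exact sqrt_tsum_norm_reducedPropagator_mul_sub_le α hβ ht hu hv hv0 h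
  · have hswap := sqrt_tsum_norm_reducedPropagator_mul_sub_le α hβ ht hv hu hu0 h
    simp only [norm_sub_rev] at hswap ⊢
    exact hswap
end
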